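/- The SPARQL minus operation violates the set-theoretic axioms (A ∩ B) \ B = ∅ and (A \ B) ∩ B = ∅. Concretely, writing μ0 for the empty mapping: (e) ({μ0} ⋈ {μ0}) − {μ0} = {μ0}, which is nonempty; and (f) for every nonempty finite multiset Ω of solution mappings, ({μ0} − Ω) ⋈ Ω = Ω, which is nonempty. -/
import Mathlib


open scoped Classical

noncomputable section

/-- A solution mapping: a finite partial function from variables to terms. -/
abbrev SMap (V T : Type) := Finmap (fun _ : V => T)

variable {V T : Type} [DecidableEq V] [DecidableEq T]

/-- Two solution mappings are compatible if they agree on the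
intersection of their domains. -/
def Compat (μ1 μ2 : SMap V T) : Prop :=
  ∀ x ∈ μ1, x ∈ μ2 → μ1.lookup x = μ2.lookup x

/-- Join of two multisets of solution mappings: unions of compatible pairs,
multiplicities multiply and add over all decompositions. -/
def mjoin (Ω1 Ω2 : Multiset (SMap V T)) : Multiset (SMap V T) :=
  Ω1.bind fun μ1 => (Ω2.filter fun μ2 => Compat μ1 μ2).map fun μ2 => μ1 ∪ μ2

/-- Simple difference: keep (with multiplicity) the mappings of `Ω1`
incompatible with every element of `Ω2`. -/
def msdiff (Ω1 Ω2 : Multiset (SMap V T)) : Multiset (SMap V T) :=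
  Ω1.filter fun μ1 => ∀ μ2 ∈ Ω2, ¬ Compat μ1 μ2

/-- SPARQL minus: keep (with multiplicity) the mappings of `Ω1` such that every
element of `Ω2` is incompatible with it or has disjoint domain. -/
def sminus (Ω1 Ω2 : Multiset (SMap V T)) : Multiset (SMap V T) :=
  Ω1.filter fun μ1 => ∀ μ2 ∈ Ω2, ¬ Compat μ1 μ2 ∨ μ1.keys ∩ μ2.keys = ∅

/-- Domain of a multiset of mappings: the union of the domains of its elements. -/
def mdom (Ω : Multiset (SMap V T)) : Finset V := (Ω.map Finmap.keys).sup

/-- A multiset of mappings is domain-uniform when all its elements have the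
same domain. -/
def DomUniform (Ω : Multiset (SMap V T)) : Prop :=
  ∀ μ1 ∈ Ω, ∀ μ2 ∈ Ω, Finmap.keys μ1 = Finmap.keys μ2

/-- Three truth values: true, false, error. -/
inductive TV where | t | f | e
deriving DecidableEq

/-- Strong Kleene conjunction. -/
def TV.andTV : TV → TV → TV
  | .t, q => q
  | .f, _ => .f
  | .e, .t => .e
  | .e, .f => .f
  | .e, .e => .e

/-- Strong Kleene disjunction. -/
def TV.orTV : TV → TV → TV
  | .t, _ => .t
  | .f, q => q
  | .e, .t => .t
  | .e, .f => .e
  | .e, .e => .e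

/-- Three-valued negation. -/
def TV.notTV : TV → TV
  | .t => .f
  | .f => .t
  | .e => .e

/-- Selection formulas, built from atoms `x = c`, `x = y` and `bound x`. -/
inductive SForm (V T : Type) where
  | eqc : V → T → SForm V T
  | eqv : V → V → SForm V T
  | bound : V → SForm V T
  | fand : SForm V T → SForm V T → SForm V T
  | for' : SForm V T → SForm V T → SForm V T
  | fnot : SForm V T → SForm V T

/-- Three-valued evaluation of a selection formula on a solution mapping. -/
def evalF (μ : SMap V T) : SForm V T → TV
  | .eqc x c =>
    match μ.lookup x with
    | some a => if a = c then .t else .f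
    | none => .e
  | .eqv x y =>
    match μ.lookup x, μ.lookup y with
    | some a, some b => if a = b then .t else .f
    | some _, none => .e
    | none, _ => .e
  | .bound x => if x ∈ μ then .t else .f
  | .fand F1 F2 => (evalF μ F1).andTV (evalF μ F2)
  | .for' F1 F2 => (evalF μ F1).orTV (evalF μ F2)
  | .fnot F1 => (evalF μ F1).notTV

/-- Selection: keep (with multiplicity) the mappings evaluating `F` to true. -/
def sel (F : SForm V T) (Ω : Multiset (SMap V T)) : Multiset (SMap V T) :=
  Ω.filter fun μ => evalF μ F = .t

/-- W3C difference: keep (with multiplicity) the mappings `μ1` of `Ω1` such that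
every `μ2 ∈ Ω2` is incompatible with `μ1`, or compatible with
`(μ1 ∪ μ2)(F) = false`. -/
def wdiff (F : SForm V T) (Ω1 Ω2 : Multiset (SMap V T)) : Multiset (SMap V T) :=
  Ω1.filter fun μ1 => ∀ μ2 ∈ Ω2,
    ¬ Compat μ1 μ2 ∨ (Compat μ1 μ2 ∧ evalF (μ1 ∪ μ2) F = .f)

end

/-- the SPARQL minus violates `(A ∩ B) \ B = ∅` and
`(A \ B) ∩ B = ∅`: with `μ0` the empty mapping,
`({μ0} ⋈ {μ0}) − {μ0} = {μ0}` is nonempty, and for every nonempty `Ω`,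
`({μ0} − Ω) ⋈ Ω = Ω` is nonempty. -/
theorem stmt_18 {V T : Type} [DecidableEq V] [DecidableEq T] :
    (sminus (mjoin {(∅ : SMap V T)} {(∅ : SMap V T)}) {(∅ : SMap V T)} =
        {(∅ : SMap V T)} ∧
      ({(∅ : SMap V T)} : Multiset (SMap V T)) ≠ 0) ∧
    ∀ Ω : Multiset (SMap V T), Ω ≠ 0 →
      mjoin (sminus {(∅ : SMap V T)} Ω) Ω = Ω ∧ Ω ≠ 0 := by
  have hcompat : ∀ μ : SMap V T, Compat ∅ μ := by
    intro μ x hx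
    exact absurd hx Finmap.notMem_empty
  have hsminus : ∀ Ω : Multiset (SMap V T), sminus {(∅ : SMap V T)} Ω = {(∅ : SMap V T)} := by
    intro Ω
    unfold sminus
    rw [Multiset.filter_eq_self]
    intro μ hμ
    rw [Multiset.mem_singleton] at hμ
    subst hμ
    intro μ2 _
    right
    simp [Finmap.keys_empty]
  have hjoin : ∀ Ω : Multiset (SMap V T), mjoin {(∅ : SMap V T)} Ω = Ω := by
    intro Ω
    unfold mjoin
    rw [Multiset.singleton_bind]
    rw [Multiset.filter_eq_self.2 (fun μ _ => hcompat μ)]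
    simp [Finmap.empty_union]
  refine ⟨⟨?_, by simp⟩, fun Ω hΩ => ⟨?_, hΩ⟩⟩
  · rw [hjoin, hsminus]
  · rw [hsminus, hjoin]
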